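/- Let Γ be a group acting on a monoid M by monoid automorphisms, let f ∈ M, let 𝒜_f = {α ∈ Mˣ : α^{-1}·f·α = f}, assume 𝒜_f is finite and Γ-stable, and suppose φ : Γ → Mˣ satisfies σ • f = (φ σ)^{-1}·f·(φ σ) for all σ ∈ Γ. Then the following are equivalent: (1) there exists γ ∈ Mˣ such that γ^{-1}·f·γ is fixed by every σ ∈ Γ; (2) there exists δ ∈ Mˣ such that for every σ ∈ Γ, the element (φ σ)·(σ • δ)^{-1}·δ lies in 𝒜_f (i.e. φ σ ∈ 𝒜_f·δ^{-1}·(σ • δ), so φ is a coboundary modulo 𝒜_f). -/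

import Mathlib

/-!
Applying `σ` to the conjugate `γ⁻¹ f γ` gives `(φ σ · σγ)⁻¹ f (φ σ · σγ)`, and two conjugates of
`f` agree exactly when the quotient of the conjugating units stabilizes `f`. So `σ` fixes
`γ⁻¹ f γ` iff `φ σ · σγ · γ⁻¹ ∈ 𝒜_f`, which is condition (2) for `δ = γ⁻¹`.
-/

/-- The action of `σ : Γ` on the units of a monoid `M`, induced by a
`MulDistribMulAction` of `Γ` on `M`. -/
def unitsSMul {Γ M : Type*} [Group Γ] [Monoid M] [MulDistribMulAction Γ M]
    (σ : Γ) (u : Mˣ) : Mˣ :=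
  Units.map (MulDistribMulAction.toMonoidHom M σ) u

def unitConj {M : Type*} [Monoid M] (u : Mˣ) (a : M) : M :=
  ↑u⁻¹ * a * ↑u

section unitConj

variable {M : Type*} [Monoid M]

lemma unitConj_mul (u v : Mˣ) (a : M) : unitConj (u * v) a = unitConj v (unitConj u a) := by
  simp only [unitConj, mul_inv_rev, Units.val_mul, mul_assoc]

lemma unitConj_one (a : M) : unitConj 1 a = a := by
  simp [unitConj]

lemma unitConj_eq_unitConj_iff (u v : Mˣ) (a : M) :
    unitConj u a = unitConj v a ↔ unitConj (u * v⁻¹) a = a := by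
  rw [unitConj_mul]
  constructor
  · intro h
    rw [h, ← unitConj_mul, mul_inv_cancel, unitConj_one]
  · intro h
    calc unitConj u a = unitConj (v⁻¹ * v) (unitConj u a) := by rw [inv_mul_cancel, unitConj_one]
      _ = unitConj v a := by rw [unitConj_mul, h]

end unitConj

section unitsSMul

variable {Γ M : Type*} [Group Γ] [Monoid M] [MulDistribMulAction Γ M]

lemma coe_unitsSMul (σ : Γ) (u : Mˣ) : (↑(unitsSMul σ u) : M) = σ • (↑u : M) := rfl

lemma unitsSMul_inv (σ : Γ) (u : Mˣ) : unitsSMul σ u⁻¹ = (unitsSMul σ u)⁻¹ :=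
  map_inv (Units.map (MulDistribMulAction.toMonoidHom M σ)) u

lemma smul_unitConj (σ : Γ) (u : Mˣ) (a : M) :
    σ • unitConj u a = unitConj (unitsSMul σ u) (σ • a) := by
  simp only [unitConj, smul_mul', ← coe_unitsSMul, unitsSMul_inv]

lemma smul_unitConj_inv_eq_self_iff {f : M} {c : Mˣ} {σ : Γ} (hc : σ • f = unitConj c f)
    (δ : Mˣ) :
    σ • unitConj δ⁻¹ f = unitConj δ⁻¹ f ↔ unitConj (c * (unitsSMul σ δ)⁻¹ * δ) f = f := by
  rw [smul_unitConj, hc, ← unitConj_mul, unitConj_eq_unitConj_iff, unitsSMul_inv, inv_inv]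

end unitsSMul

theorem fod_iff_coboundary_general
    {Γ M : Type*} [Group Γ] [Monoid M] [MulDistribMulAction Γ M]
    (f : M)
    (𝒜 : Set Mˣ) (h𝒜 : 𝒜 = {α : Mˣ | (↑α⁻¹ : M) * f * ↑α = f})
    (φ : Γ → Mˣ)
    (hφ : ∀ σ : Γ, σ • f = (↑(φ σ)⁻¹ : M) * f * ↑(φ σ)) :
    (∃ γ : Mˣ, ∀ σ : Γ, σ • ((↑γ⁻¹ : M) * f * ↑γ) = (↑γ⁻¹ : M) * f * ↑γ) ↔
      (∃ δ : Mˣ, ∀ σ : Γ, φ σ * (unitsSMul σ δ)⁻¹ * δ ∈ 𝒜) := by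
  subst h𝒜
  rw [inv_surjective.exists]
  exact exists_congr fun δ => forall_congr' fun σ => smul_unitConj_inv_eq_self_iff (hφ σ) δ

/-- **Doyle–Silverman, Proposition 4.1(b) (abstract form).**  Let `Γ` act on a monoid `M`
by monoid automorphisms, let `f ∈ M`, let `𝒜_f ⊆ Mˣ` be the stabilizer of `f` under
conjugation, assumed finite and `Γ`-stable, and let `φ : Γ → Mˣ` satisfy
`σ • f = (φ σ)⁻¹ · f · (φ σ)`.  Then some conjugate `γ⁻¹·f·γ` of `f` is fixed by all of
`Γ` if and only if `φ` is a coboundary modulo `𝒜_f`, i.e. there is `δ ∈ Mˣ` with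
`(φ σ)·(σ • δ)⁻¹·δ ∈ 𝒜_f` for all `σ`. -/
theorem fod_iff_coboundary
    {Γ M : Type*} [Group Γ] [Monoid M] [MulDistribMulAction Γ M]
    (f : M)
    (𝒜 : Set Mˣ) (h𝒜 : 𝒜 = {α : Mˣ | (↑α⁻¹ : M) * f * ↑α = f})
    (hfin : 𝒜.Finite)
    (hstable : ∀ σ : Γ, (fun α => unitsSMul σ α) '' 𝒜 = 𝒜)
    (φ : Γ → Mˣ)
    (hφ : ∀ σ : Γ, σ • f = (↑(φ σ)⁻¹ : M) * f * ↑(φ σ)) :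
    (∃ γ : Mˣ, ∀ σ : Γ, σ • ((↑γ⁻¹ : M) * f * ↑γ) = (↑γ⁻¹ : M) * f * ↑γ) ↔
      (∃ δ : Mˣ, ∀ σ : Γ, φ σ * (unitsSMul σ δ)⁻¹ * δ ∈ 𝒜) :=
  fod_iff_coboundary_general f 𝒜 h𝒜 φ hφ
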